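/- Let (X, d) be a metric space, K ∈ ℝ, N < 0, and f : X → [−∞,+∞]. Let (x_s)_{s∈[0,1]} be a geodesic with x₀ ∈ D[f] and d := d(x₀, x₁) < π·√(N/K) when K < 0, along which the (K,N)-convexity inequality holds, i.e. f_N(x_t) ≤ σ_{K,N}^{(1−t)}(d)·f_N(x₀) + σ_{K,N}^{(t)}(d)·f_N(x₁) for all t ∈ [0,1]. Then the directional derivative of f_N at x₀ along this geodesic satisfies f_N′(x₀; x) ≤ (d/𝔰_{K,N}(d))·(f_N(x₁) − 𝔠_{K,N}(d)·f_N(x₀)). -/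

import Mathlib

open Filter MeasureTheory Set
open scoped ENNReal Topology

noncomputable section

namespace KNPaper

variable {X : Type*} [MetricSpace X]

/-- A geodesic parametrized on `[0,1]`: `d(γ s, γ t) = |t - s| * d(γ 0, γ 1)`. -/
def IsGeodesic (γ : ℝ → X) : Prop :=
  ∀ s ∈ Set.Icc (0:ℝ) 1, ∀ t ∈ Set.Icc (0:ℝ) 1,
    dist (γ s) (γ t) = |t - s| * dist (γ 0) (γ 1)

/-- Extended exponential `EReal → ℝ≥0∞`, with `exp ⊥ = 0` and `exp ⊤ = ⊤`. -/
def eexp (x : EReal) : ℝ≥0∞ :=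
  if x = ⊤ then ⊤ else if x = ⊥ then 0 else ENNReal.ofReal (Real.exp x.toReal)

/-- The nonnegative part of an extended real, valued in `ℝ≥0∞`. -/
def epos (x : EReal) : ℝ≥0∞ :=
  if x = ⊤ then ⊤ else ENNReal.ofReal x.toReal

/-- `f_N := exp (-f/N)`, with the conventions `exp(-∞) = 0`, `exp(+∞) = +∞`. -/
def fN (f : X → EReal) (N : ℝ) (x : X) : ℝ≥0∞ :=
  eexp (((-1/N : ℝ) : EReal) * f x)

/-- The finiteness domain `D[f]`. -/
def Dom (f : X → EReal) : Set X := {x | f x ≠ ⊤ ∧ f x ≠ ⊥}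

/-- The extended domain `D*[f]`. -/
def DomStar (f : X → EReal) : Set X := {x | f x ≠ ⊤}

/-- The function `𝔰_{K,N}`. -/
def sKN (K N θ : ℝ) : ℝ :=
  if K < 0 then Real.sin (θ * Real.sqrt (K/N)) / Real.sqrt (K/N)
  else if K = 0 then θ
  else Real.sinh (θ * Real.sqrt (-K/N)) / Real.sqrt (-K/N)

/-- The function `𝔠_{K,N}`. -/
def cKN (K N θ : ℝ) : ℝ :=
  if K < 0 then Real.cos (θ * Real.sqrt (K/N))
  else if K = 0 then 1
  else Real.cosh (θ * Real.sqrt (-K/N))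

/-- The distortion coefficient `σ_{K,N}^{(t)}(θ)`, valued in `[0,∞]`. -/
def sigmaKN (K N t θ : ℝ) : ℝ≥0∞ :=
  if (N * Real.pi ^ 2 < K * θ ^ 2 ∧ K * θ ^ 2 < 0) ∨ 0 < K * θ ^ 2 then
    ENNReal.ofReal (sKN K N (t * θ) / sKN K N θ)
  else if K * θ ^ 2 = 0 then ENNReal.ofReal t
  else ⊤

/-- `(K,N)`-convexity of `f` on a subset `s` (with `N < 0`). -/
def KNConvexOn (f : X → EReal) (K N : ℝ) (s : Set X) : Prop :=
  ∀ x₀ ∈ s, ∀ x₁ ∈ s, f x₀ ≠ ⊤ → f x₁ ≠ ⊤ →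
    (K < 0 → dist x₀ x₁ < Real.pi * Real.sqrt (N / K)) →
    ∃ γ : ℝ → X, IsGeodesic γ ∧ (∀ t ∈ Set.Icc (0:ℝ) 1, γ t ∈ s) ∧ γ 0 = x₀ ∧ γ 1 = x₁ ∧
      ∀ t ∈ Set.Icc (0:ℝ) 1,
        fN f N (γ t) ≤ sigmaKN K N (1 - t) (dist x₀ x₁) * fN f N x₀
          + sigmaKN K N t (dist x₀ x₁) * fN f N x₁

/-- `(K,N)`-convexity of `f` (with `N < 0`). -/
def KNConvex (f : X → EReal) (K N : ℝ) : Prop := KNConvexOn f K N Set.univ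

/-- `λ`-convexity of an extended-real-valued function along geodesics. -/
def LambdaConvex (g : X → EReal) (lam : ℝ) : Prop :=
  ∀ x₀ x₁ : X, x₀ ∈ Dom g → x₁ ∈ Dom g →
    ∃ γ : ℝ → X, IsGeodesic γ ∧ γ 0 = x₀ ∧ γ 1 = x₁ ∧
      ∀ t ∈ Set.Icc (0:ℝ) 1,
        g (γ t) ≤ (((1 - t) * (g x₀).toReal + t * (g x₁).toReal
          - lam / 2 * (t * (1 - t)) * dist x₀ x₁ ^ 2 : ℝ) : EReal)

/-- Upper right Dini derivative of a real function, valued in `EReal`. -/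
def diniUR (g : ℝ → ℝ) (t : ℝ) : EReal :=
  Filter.limsup (fun h : ℝ => (((g (t + h) - g t) / h : ℝ) : EReal)) (𝓝[>] (0:ℝ))

/-- The time interval `(0,T)` for `T ∈ (0,∞]`, as a set of reals. -/
def domT (T : ℝ≥0∞) : Set ℝ := {t : ℝ | 0 < t ∧ ENNReal.ofReal t < T}

/-- `EVI_λ` gradient curve for `g` on `(0,T)`. -/
def IsEVIlam (g : X → EReal) (lam : ℝ) (T : ℝ≥0∞) (z : ℝ → X) : Prop :=
  0 < T ∧ ContinuousOn z (domT T) ∧ (∀ t ∈ domT T, z t ∈ Dom g) ∧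
    ∀ t ∈ domT T, ∀ x ∈ Dom g,
      diniUR (fun s => dist (z s) x ^ 2 / 2) t + ((lam / 2 * dist (z t) x ^ 2 : ℝ) : EReal)
        ≤ (((g x).toReal - (g (z t)).toReal : ℝ) : EReal)

/-- `EVI_{K,N}` gradient curve for `f` on `(0,T)` (with `N < 0`). -/
def IsEVIKN (f : X → EReal) (K N : ℝ) (T : ℝ≥0∞) (y : ℝ → X) : Prop :=
  0 < T ∧ ContinuousOn y (domT T) ∧ (∀ t ∈ domT T, y t ∈ Dom f) ∧
    ∀ t ∈ domT T, ∀ x ∈ closure (Dom f),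
      (K < 0 → dist (y t) x < Real.pi * Real.sqrt (N / K)) →
      diniUR (fun s => sKN K N (dist (y s) x / 2) ^ 2) t
          + ((K * sKN K N (dist (y t) x / 2) ^ 2 : ℝ) : EReal)
        ≤ ((N / 2 : ℝ) : EReal) * (1 - ((fN f N x / fN f N (y t) : ℝ≥0∞) : EReal))

/-- A curve starts at `y₀` if `y_t → y₀` as `t ↓ 0`. -/
def StartsAt (y : ℝ → X) (y₀ : X) : Prop := Filter.Tendsto y (𝓝[>] (0:ℝ)) (𝓝 y₀)

/-- The class `𝒞` of continuous curves on `(0,T)` with values in `D[f]`. -/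
def InC (f : X → EReal) (T : ℝ≥0∞) (y : ℝ → X) : Prop :=
  0 < T ∧ ContinuousOn y (domT T) ∧ ∀ t ∈ domT T, y t ∈ Dom f

/-- The class `𝒞'`: curves in `𝒞` along which `f` is non-increasing. -/
def InC' (f : X → EReal) (T : ℝ≥0∞) (y : ℝ → X) : Prop :=
  InC f T y ∧ ∀ s ∈ domT T, ∀ t ∈ domT T, s ≤ t → f (y t) ≤ f (y s)

/-- The class `𝒞''_N`: curves in `𝒞'` with `∫₀^{min(T,1)} f_N(y_t) dt < ∞`. -/
def InC'' (f : X → EReal) (N : ℝ) (T : ℝ≥0∞) (y : ℝ → X) : Prop :=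
  InC' f T y ∧ ∫⁻ t in Set.Ioo (0:ℝ) ((min T 1).toReal), fN f N (y t) < ⊤

/-- The function `α(t) = -N ∫₀ᵗ f_N(y_r)⁻¹ dr`. -/
def alphaMap (f : X → EReal) (N : ℝ) (y : ℝ → X) (t : ℝ) : ℝ :=
  -N * ∫ r in Set.Ioo (0:ℝ) t, ((fN f N (y r))⁻¹).toReal

/-- The final time `T' = lim_{t→T⁻} α(t)` of the reparametrized curve `ℛ₁(y)`. -/
def R1T (f : X → EReal) (N : ℝ) (T : ℝ≥0∞) (y : ℝ → X) : ℝ≥0∞ :=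
  ⨆ t ∈ domT T, ENNReal.ofReal (alphaMap f N y t)

/-- The reparametrized curve `ℛ₁(y) = y ∘ φ`, `φ = α⁻¹`. -/
def R1fun (f : X → EReal) (N : ℝ) (T : ℝ≥0∞) (y : ℝ → X) : ℝ → X :=
  y ∘ Function.invFunOn (alphaMap f N y) (domT T)

/-- The function `β(s) = -(1/N) ∫₀ˢ f_N(z_r) dr`. -/
def betaMap (f : X → EReal) (N : ℝ) (z : ℝ → X) (s : ℝ) : ℝ :=
  -(1/N) * ∫ r in Set.Ioo (0:ℝ) s, (fN f N (z r)).toReal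

/-- The final time `T = lim_{s→T'⁻} β(s)` of the reparametrized curve `ℛ₂(z)`. -/
def R2T (f : X → EReal) (N : ℝ) (T' : ℝ≥0∞) (z : ℝ → X) : ℝ≥0∞ :=
  ⨆ s ∈ domT T', ENNReal.ofReal (betaMap f N z s)

/-- The reparametrized curve `ℛ₂(z) = z ∘ ψ`, `ψ = β⁻¹`. -/
def R2fun (f : X → EReal) (N : ℝ) (T' : ℝ≥0∞) (z : ℝ → X) : ℝ → X :=
  z ∘ Function.invFunOn (betaMap f N z) (domT T')

/-- The descending slope `|D⁻f|(y) = limsup_{z→y} (f(y)-f(z))⁺ / d(z,y)`, in `[0,∞]`. -/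
def descSlope (f : X → EReal) (y : X) : ℝ≥0∞ :=
  Filter.limsup (fun z : X => epos (f y - f z) / ENNReal.ofReal (dist z y)) (𝓝[≠] y)

/-- Directional derivative `g'(γ 0; ·) = liminf_{t↓0} (g(γ t) - g(γ 0))/t` along a curve. -/
def dirDeriv (g : X → EReal) (γ : ℝ → X) : EReal :=
  Filter.liminf (fun t : ℝ => (g (γ t) - g (γ 0)) * (((1/t : ℝ)) : EReal)) (𝓝[>] (0:ℝ))

/-- The quantity `[ẏ, z]_{t₀} = sup_{0<s≤1} (1/(2s)) (d⁺/dt)|_{t₀} d(y_t, z_s)²`. -/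
def bracket (y z : ℝ → X) (t₀ : ℝ) : EReal :=
  ⨆ s ∈ Set.Ioc (0:ℝ) 1,
    (((1 / (2 * s) : ℝ)) : EReal) * diniUR (fun t => dist (y t) (z s) ^ 2) t₀

/-- Metric speed `|γ̇|(t) = lim_{h→0} d(γ(t+h), γ(t))/|h| = v`. -/
def HasMetricSpeedAt (γ : ℝ → X) (t v : ℝ) : Prop :=
  Filter.Tendsto (fun h : ℝ => dist (γ (t + h)) (γ t) / |h|) (𝓝[≠] (0:ℝ)) (𝓝 v)

open Classical in
/-- The metric speed of a curve at a time (defaulting to `0` when it does not exist). -/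
def metricSpeed (γ : ℝ → X) (t : ℝ) : ℝ :=
  if h : ∃ v, HasMetricSpeedAt γ t v then h.choose else 0

/-- Metric absolute continuity on `[s,t]` with derivative control in `Lᵖ`. -/
def MetricACWith (p : ℝ≥0∞) (γ : ℝ → X) (s t : ℝ) : Prop :=
  ∃ g : ℝ → ℝ, MeasureTheory.MemLp g p (MeasureTheory.volume.restrict (Set.Icc s t)) ∧
    ∀ u ∈ Set.Icc s t, ∀ v ∈ Set.Icc s t, u ≤ v → dist (γ u) (γ v) ≤ ∫ r in u..v, g r

/-- `ACᵖ_loc` on a set: metric absolute continuity on every compact subinterval. -/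
def LocACOn (p : ℝ≥0∞) (γ : ℝ → X) (I : Set ℝ) : Prop :=
  ∀ s t : ℝ, s ≤ t → Set.Icc s t ⊆ I → MetricACWith p γ s t

/-- Curve of maximal slope for `f` on `(0,T)`. -/
def IsMaxSlopeCurve (f : X → EReal) (T : ℝ≥0∞) (y : ℝ → X) : Prop :=
  0 < T ∧ (∀ t ∈ domT T, y t ∈ Dom f) ∧
  LocACOn 1 y (domT T) ∧
  LocACOn 1 (fun t => (f (y t)).toReal) (domT T) ∧
  (∀ᵐ t ∂(MeasureTheory.volume.restrict (domT T)), ∃ v : ℝ, HasMetricSpeedAt y t v) ∧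
  ∀ᵐ t ∂(MeasureTheory.volume.restrict (domT T)),
    ∃ d : ℝ, HasDerivAt (fun s => (f (y s)).toReal) d t ∧
      ENNReal.ofReal (2⁻¹ * metricSpeed y t ^ 2) + 2⁻¹ * descSlope f (y t) ^ 2
        ≤ ENNReal.ofReal (-d)

end KNPaper

/-! For `t ∈ (0,1)` the `(K,N)`-convexity inequality bounds `(f_N(x_t) - f_N(x₀))/t` by the
difference quotient at `0` of `t ↦ σ^{(1-t)}(d) f_N(x₀) + σ^{(t)}(d) f_N(x₁)`, a function equal
to `f_N(x₀)` at `t = 0`. The bound on `d` makes `𝔰` positive on `(0,d]`, so that `σ^{(t)}(d)` is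
the ratio `𝔰(td)/𝔰(d)`, and since `𝔰' = 𝔠` and `𝔠(0) = 1` that difference quotient tends to
`(d/𝔰(d))(f_N(x₁) - 𝔠(d) f_N(x₀))`. When `d = 0` the geodesic is constant, and when
`f_N(x₁) = ∞` the right-hand side is `∞`. -/

lemma EReal.coe_ennreal_sub_mul_le {x : ℝ≥0∞} {p a s : ℝ} (hx : x ≠ ⊤) (hxp : x.toReal ≤ p)
    (hs : 0 ≤ s) : ((x : EReal) - a) * s ≤ ((p - a) * s : ℝ) := by
  rw [← EReal.coe_ennreal_toReal hx, ← EReal.coe_sub, ← EReal.coe_mul, EReal.coe_le_coe_iff]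
  gcongr

namespace KNPaper

section

variable {K N : ℝ}

lemma sKN_zero (K N : ℝ) : sKN K N 0 = 0 := by
  unfold sKN; split_ifs <;> simp

lemma cKN_zero (K N : ℝ) : cKN K N 0 = 1 := by
  unfold cKN; split_ifs <;> simp

lemma hasDerivAt_sKN (hN : N < 0) (θ : ℝ) : HasDerivAt (sKN K N) (cKN K N θ) θ := by
  rcases lt_trichotomy K 0 with hK | rfl | hK
  · have hκ : Real.sqrt (K / N) ≠ 0 := (Real.sqrt_pos.mpr (div_pos_of_neg_of_neg hK hN)).ne'
    have h := (((hasDerivAt_id θ).mul_const (Real.sqrt (K / N))).sin).div_const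
      (Real.sqrt (K / N))
    simp only [id, one_mul, mul_div_cancel_right₀ _ hκ] at h
    rwa [show sKN K N = _ from funext fun θ => if_pos hK, cKN, if_pos hK]
  · rw [show sKN 0 N = id from funext fun θ => by simp [sKN], cKN, if_neg (lt_irrefl 0),
      if_pos rfl]
    exact hasDerivAt_id θ
  · have hκ : Real.sqrt (-K / N) ≠ 0 :=
      (Real.sqrt_pos.mpr (div_pos_of_neg_of_neg (neg_neg_of_pos hK) hN)).ne'
    have h := (((hasDerivAt_id θ).mul_const (Real.sqrt (-K / N))).sinh).div_const
      (Real.sqrt (-K / N))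
    simp only [id, one_mul, mul_div_cancel_right₀ _ hκ] at h
    have hs : sKN K N = fun θ => Real.sinh (θ * Real.sqrt (-K / N)) / Real.sqrt (-K / N) :=
      funext fun θ => by simp only [sKN, if_neg hK.not_gt, if_neg hK.ne']
    rwa [hs, cKN, if_neg hK.not_gt, if_neg hK.ne']

lemma mul_sqrt_lt_pi (hK : K < 0) (hN : N < 0) {θ : ℝ}
    (hθ : θ < Real.pi * Real.sqrt (N / K)) : θ * Real.sqrt (K / N) < Real.pi := by
  have hκ : 0 < Real.sqrt (K / N) := Real.sqrt_pos.mpr (div_pos_of_neg_of_neg hK hN)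
  rwa [← inv_div K N, Real.sqrt_inv, ← div_eq_mul_inv, lt_div_iff₀ hκ] at hθ

lemma sKN_pos (hN : N < 0) {θ : ℝ} (hθ0 : 0 < θ)
    (hθ : K < 0 → θ < Real.pi * Real.sqrt (N / K)) : 0 < sKN K N θ := by
  rcases lt_trichotomy K 0 with hK | rfl | hK
  · have hκ : 0 < Real.sqrt (K / N) := Real.sqrt_pos.mpr (div_pos_of_neg_of_neg hK hN)
    have : 0 < Real.sin (θ * Real.sqrt (K / N)) :=
      Real.sin_pos_of_pos_of_lt_pi (by positivity) (mul_sqrt_lt_pi hK hN (hθ hK))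
    simp only [sKN, if_pos hK]
    positivity
  · simpa [sKN] using hθ0
  · have hκ : 0 < Real.sqrt (-K / N) :=
      Real.sqrt_pos.mpr (div_pos_of_neg_of_neg (neg_neg_of_pos hK) hN)
    have : 0 < Real.sinh (θ * Real.sqrt (-K / N)) := Real.sinh_pos_iff.mpr (by positivity)
    simp only [sKN, if_neg hK.not_gt, if_neg hK.ne']
    positivity

lemma sKN_nonneg (hN : N < 0) {θ : ℝ} (hθ0 : 0 ≤ θ)
    (hθ : K < 0 → θ < Real.pi * Real.sqrt (N / K)) : 0 ≤ sKN K N θ := by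
  rcases hθ0.eq_or_lt with rfl | hθ0
  · rw [sKN_zero]
  · exact (sKN_pos hN hθ0 hθ).le

lemma sigmaKN_eq (hN : N < 0) {θ : ℝ} (hθ0 : 0 < θ)
    (hθ : K < 0 → θ < Real.pi * Real.sqrt (N / K)) (t : ℝ) :
    sigmaKN K N t θ = ENNReal.ofReal (sKN K N (t * θ) / sKN K N θ) := by
  rcases lt_trichotomy K 0 with hK | rfl | hK
  · have hsq : (θ * Real.sqrt (K / N)) ^ 2 < Real.pi ^ 2 :=
      pow_lt_pow_left₀ (mul_sqrt_lt_pi hK hN (hθ hK)) (by positivity) two_ne_zero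
    rw [mul_pow, Real.sq_sqrt (div_pos_of_neg_of_neg hK hN).le, ← mul_div_assoc,
      div_lt_iff_of_neg hN] at hsq
    rw [sigmaKN, if_pos (Or.inl ⟨by linarith, mul_neg_of_neg_of_pos hK (by positivity)⟩)]
  · simp [sigmaKN, sKN, hθ0.ne']
  · rw [sigmaKN, if_pos (Or.inr (by positivity))]

lemma sKN_mul_div_sKN_nonneg (hN : N < 0) {θ t : ℝ} (hθ0 : 0 < θ)
    (hθ : K < 0 → θ < Real.pi * Real.sqrt (N / K)) (ht : t ∈ Icc (0 : ℝ) 1) :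
    0 ≤ sKN K N (t * θ) / sKN K N θ :=
  div_nonneg (sKN_nonneg hN (by nlinarith [ht.1]) fun hK => by nlinarith [ht.2, hθ hK])
    (sKN_pos hN hθ0 hθ).le

lemma toReal_le_of_le_sigmaKN (hN : N < 0) {θ t : ℝ} (hθ0 : 0 < θ)
    (hθ : K < 0 → θ < Real.pi * Real.sqrt (N / K)) (ht : t ∈ Icc (0 : ℝ) 1)
    {x y z : ℝ≥0∞} (hx : x ≠ ⊤) (hy : y ≠ ⊤)
    (hz : z ≤ sigmaKN K N (1 - t) θ * x + sigmaKN K N t θ * y) :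
    z ≠ ⊤ ∧ z.toReal ≤ sKN K N ((1 - t) * θ) / sKN K N θ * x.toReal
      + sKN K N (t * θ) / sKN K N θ * y.toReal := by
  have h1 := sKN_mul_div_sKN_nonneg hN hθ0 hθ ⟨sub_nonneg.mpr ht.2, sub_le_self 1 ht.1⟩
  have h2 := sKN_mul_div_sKN_nonneg hN hθ0 hθ ht
  have hq := add_nonneg (mul_nonneg h1 (ENNReal.toReal_nonneg (a := x)))
    (mul_nonneg h2 (ENNReal.toReal_nonneg (a := y)))
  rw [sigmaKN_eq hN hθ0 hθ, sigmaKN_eq hN hθ0 hθ, ← ENNReal.ofReal_toReal hx,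
    ← ENNReal.ofReal_toReal hy, ← ENNReal.ofReal_mul h1, ← ENNReal.ofReal_mul h2,
    ← ENNReal.ofReal_add (by positivity) (by positivity)] at hz
  exact ⟨ne_top_of_le_ne_top ENNReal.ofReal_ne_top hz, ENNReal.toReal_le_of_le_ofReal hq hz⟩

lemma tendsto_sigmaKN_slope (hN : N < 0) {θ : ℝ} (hs : sKN K N θ ≠ 0) (a b : ℝ) :
    Tendsto (fun t => (sKN K N ((1 - t) * θ) / sKN K N θ * a
        + sKN K N (t * θ) / sKN K N θ * b - a) * (1 / t))
      (𝓝[>] 0) (𝓝 (θ / sKN K N θ * (b - cKN K N θ * a))) := by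
  have hderiv : HasDerivAt (fun t => sKN K N ((1 - t) * θ) / sKN K N θ * a
        + sKN K N (t * θ) / sKN K N θ * b) (θ / sKN K N θ * (b - cKN K N θ * a)) 0 := by
    have h1 : HasDerivAt (fun t : ℝ => (1 - t) * θ) (-θ) 0 := by
      simpa using ((hasDerivAt_id (0 : ℝ)).const_sub 1).mul_const θ
    have h2 : HasDerivAt (fun t : ℝ => t * θ) θ 0 := by
      simpa using (hasDerivAt_id (0 : ℝ)).mul_const θ
    refine (((((hasDerivAt_sKN (K := K) hN _).comp 0 h1).div_const _).mul_const a).add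
      ((((hasDerivAt_sKN hN _).comp 0 h2).div_const _).mul_const b)).congr_deriv ?_
    simp only [sub_zero, one_mul, zero_mul, cKN_zero]
    ring
  convert hderiv.tendsto_slope_zero_right using 2 with t
  simp only [one_div, zero_add, sub_zero, one_mul, div_self hs, zero_mul, sKN_zero, zero_div,
    add_zero, smul_eq_mul]
  ring

end

section

variable {X : Type*}

lemma eexp_ne_top {x : EReal} (hx : x ≠ ⊤) : eexp x ≠ ⊤ := by
  unfold eexp
  split_ifs <;> simp_all

lemma fN_ne_top {f : X → EReal} {N : ℝ} (hN : N ≤ 0) {x : X} (hx : f x ≠ ⊤) :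
    fN f N x ≠ ⊤ := by
  have hc : (0 : EReal) ≤ ((-1 / N : ℝ) : EReal) :=
    EReal.coe_nonneg.mpr (div_nonneg_of_nonpos (by norm_num) hN)
  exact eexp_ne_top ((EReal.mul_ne_top _ _).mpr ⟨Or.inl (EReal.coe_ne_bot _), Or.inl hc,
    Or.inl (EReal.coe_ne_top _), Or.inr hx⟩)

lemma IsGeodesic.eqOn_of_dist_eq_zero [MetricSpace X] {γ : ℝ → X} (hγ : IsGeodesic γ)
    (h : dist (γ 0) (γ 1) = 0) : EqOn γ (fun _ => γ 0) (Icc 0 1) := fun t ht =>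
  (dist_eq_zero.mp (by rw [hγ 0 (left_mem_Icc.mpr zero_le_one) t ht, h, mul_zero])).symm

lemma dirDeriv_le_of_tendsto {g : X → EReal} {γ : ℝ → X} {P : ℝ → ℝ} {L : ℝ}
    (hle : ∀ᶠ t in 𝓝[>] 0, (g (γ t) - g (γ 0)) * ((1 / t : ℝ) : EReal) ≤ P t)
    (hP : Tendsto P (𝓝[>] 0) (𝓝 L)) : dirDeriv g γ ≤ L :=
  (liminf_le_liminf hle).trans_eq (EReal.tendsto_coe.mpr hP).liminf_eq

lemma dirDeriv_nonpos_of_eqOn (g : X → EReal) {γ : ℝ → X}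
    (hγ : EqOn γ (fun _ => γ 0) (Icc 0 1)) : dirDeriv g γ ≤ 0 := by
  refine dirDeriv_le_of_tendsto (P := fun _ => 0) ?_ tendsto_const_nhds
  filter_upwards [Ioo_mem_nhdsGT one_pos] with t ht
  rw [hγ (Ioo_subset_Icc_self ht), EReal.coe_zero]
  exact EReal.mul_nonpos_iff.mpr
    (Or.inr ⟨EReal.sub_self_le_zero, EReal.coe_nonneg.mpr (by simpa using ht.1.le)⟩)

end

end KNPaper

theorem stmt_8 {X : Type*} [MetricSpace X] (f : X → EReal) (K N : ℝ) (hN : N < 0)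
    (γ : ℝ → X) (hγ : KNPaper.IsGeodesic γ) (h0 : γ 0 ∈ KNPaper.Dom f)
    (hd : K < 0 → dist (γ 0) (γ 1) < Real.pi * Real.sqrt (N / K))
    (hconv : ∀ t ∈ Set.Icc (0:ℝ) 1,
      KNPaper.fN f N (γ t)
        ≤ KNPaper.sigmaKN K N (1 - t) (dist (γ 0) (γ 1)) * KNPaper.fN f N (γ 0)
          + KNPaper.sigmaKN K N t (dist (γ 0) (γ 1)) * KNPaper.fN f N (γ 1)) :
    KNPaper.dirDeriv (fun x => ((KNPaper.fN f N x : ℝ≥0∞) : EReal)) γ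
      ≤ ((dist (γ 0) (γ 1) / KNPaper.sKN K N (dist (γ 0) (γ 1)) : ℝ) : EReal)
          * (((KNPaper.fN f N (γ 1) : ℝ≥0∞) : EReal)
            - ((KNPaper.cKN K N (dist (γ 0) (γ 1))
                * (KNPaper.fN f N (γ 0)).toReal : ℝ) : EReal)) := by
  open KNPaper in
  rcases (dist_nonneg (x := γ 0) (y := γ 1)).eq_or_lt with hd0 | hd0
  · rw [← hd0, sKN_zero, div_zero, EReal.coe_zero, zero_mul]
    exact dirDeriv_nonpos_of_eqOn _ (hγ.eqOn_of_dist_eq_zero hd0.symm)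
  have hs := sKN_pos hN hd0 hd
  by_cases hb : fN f N (γ 1) = ⊤
  · rw [hb, EReal.coe_ennreal_top, EReal.top_sub_coe,
      EReal.mul_top_of_pos (EReal.coe_pos.mpr (div_pos hd0 hs))]
    exact le_top
  have ha := fN_ne_top hN.le h0.1
  rw [← EReal.coe_ennreal_toReal hb, ← EReal.coe_sub, ← EReal.coe_mul]
  refine dirDeriv_le_of_tendsto ?_ (tendsto_sigmaKN_slope hN hs.ne' _ _)
  filter_upwards [Ioo_mem_nhdsGT one_pos] with t ht
  obtain ⟨hfin, hle⟩ := toReal_le_of_le_sigmaKN hN hd0 hd (Ioo_subset_Icc_self ht) ha hb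
    (hconv t (Ioo_subset_Icc_self ht))
  rw [← EReal.coe_ennreal_toReal ha]
  exact EReal.coe_ennreal_sub_mul_le hfin hle (one_div_pos.mpr ht.1).le
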